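/- Let π be a set of primes. Then the class N^π is itself an N^π-Fitting class; that is: (i) every N^π-Dnormal subgroup of a group in N^π belongs to N^π, and (ii) if M and N are N^π-Dnormal subgroups of a finite group G with G = ⟨M, N⟩ and M, N ∈ N^π, then G ∈ N^π. -/

import Mathlib

/-- A (finite) group is a `π`-group if every prime dividing its order lies in `π`. -/
def IsPiGroup (π : Set ℕ) (G : Type*) [Group G] : Prop :=
  ∀ p : ℕ, p.Prime → p ∣ Nat.card G → p ∈ π

/-- `O^π(G)`: the smallest normal subgroup of `G` whose quotient is a `π`-group
(recall that `N.index = Nat.card (G ⧸ N)`). -/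
def piResidual (π : Set ℕ) (G : Type*) [Group G] : Subgroup G :=
  ⨅ N ∈ {N : Subgroup G | N.Normal ∧ ∀ p : ℕ, p.Prime → p ∣ N.index → p ∈ π}, N

/-- `O_π(G)`: the largest normal `π`-subgroup of `G`. -/
def piCore (π : Set ℕ) (G : Type*) [Group G] : Subgroup G :=
  ⨆ N ∈ {N : Subgroup G | N.Normal ∧ IsPiGroup π N}, N

/-- `O^π(H)` for a subgroup `H ≤ G`, regarded as a subgroup of `G`. -/
def piResidualIn (π : Set ℕ) {G : Type*} [Group G] (H : Subgroup G) : Subgroup G :=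
  (piResidual π H).map H.subtype

/-- `H` is `N^π`-Dnormal in `G`: if `|π| ≤ 1` this means `H` is normal in `G`; if
`|π| ≥ 2` it means that `O^π(H)` is normal in `G` and `O^π(G)` normalizes `H`. -/
def IsDnormal (π : Set ℕ) {G : Type*} [Group G] (H : Subgroup G) : Prop :=
  (π.Subsingleton ∧ H.Normal) ∨
  (¬ π.Subsingleton ∧ (piResidualIn π H).Normal ∧ piResidual π G ≤ Subgroup.normalizer (H : Set G))

/-- `S` is `N^π`-Dsubnormal in `G`: there is a chain `S = S₀ ≤ S₁ ≤ ⋯ ≤ Sₙ = G`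
with each `Sᵢ` being `N^π`-Dnormal in `Sᵢ₊₁`. -/
def IsDsubnormal (π : Set ℕ) {G : Type*} [Group G] (S : Subgroup G) : Prop :=
  ∃ (n : ℕ) (c : Fin (n + 1) → Subgroup G), c 0 = S ∧ c (Fin.last n) = ⊤ ∧
    ∀ i : Fin n, c i.castSucc ≤ c i.succ ∧
      IsDnormal π ((c i.castSucc).subgroupOf (c i.succ))

/-- `H` is subnormal in `G`. -/
def IsSubnormal' {G : Type*} [Group G] (H : Subgroup G) : Prop :=
  ∃ (n : ℕ) (c : Fin (n + 1) → Subgroup G), c 0 = H ∧ c (Fin.last n) = ⊤ ∧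
    ∀ i : Fin n, c i.castSucc ≤ c i.succ ∧
      ((c i.castSucc).subgroupOf (c i.succ)).Normal

/-- The class `N^π`: groups that are the (internal) direct product of a `π`-group and a
nilpotent `π'`-group. -/
def IsNPiGroup (π : Set ℕ) (G : Type*) [Group G] : Prop :=
  ∃ H K : Subgroup G, H.Normal ∧ K.Normal ∧ H ⊓ K = ⊥ ∧ H ⊔ K = ⊤ ∧
    IsPiGroup π H ∧ IsPiGroup πᶜ K ∧ Group.IsNilpotent K

/-- The `N^π`-residual `G^{N^π}`: the smallest normal subgroup of `G` whose quotient
belongs to the class `N^π`. -/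
def nPiResidual (π : Set ℕ) (G : Type*) [Group G] : Subgroup G :=
  ⨅ N ∈ {N : Subgroup G | ∃ h : N.Normal, letI := h; IsNPiGroup π (G ⧸ N)}, N

/-- `G` is `π'`-soluble: it has a normal series each of whose factors is either a
`π`-group or a `p`-group for some prime `p ∉ π`. -/
def IsPiPrimeSoluble (π : Set ℕ) (G : Type*) [Group G] : Prop :=
  ∃ (n : ℕ) (c : Fin (n + 1) → Subgroup G), c 0 = ⊥ ∧ c (Fin.last n) = ⊤ ∧
    ∀ i : Fin n, c i.castSucc ≤ c i.succ ∧
      ((c i.castSucc).subgroupOf (c i.succ)).Normal ∧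
      ((∀ p : ℕ, p.Prime → p ∣ ((c i.castSucc).subgroupOf (c i.succ)).index → p ∈ π) ∨
        ∃ p : ℕ, p.Prime ∧ p ∉ π ∧
          ∃ k : ℕ, ((c i.castSucc).subgroupOf (c i.succ)).index = p ^ k)

/-- An `N^π`-Fitting set of `G`. -/
def IsNPiFittingSet (π : Set ℕ) {G : Type*} [Group G] (F : Set (Subgroup G)) : Prop :=
  F.Nonempty ∧
  (∀ S ∈ F, ∀ T : Subgroup G, T ≤ S → IsDsubnormal π (T.subgroupOf S) → T ∈ F) ∧
  (∀ S ∈ F, ∀ T ∈ F, IsDnormal π (S.subgroupOf (S ⊔ T)) →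
    IsDnormal π (T.subgroupOf (S ⊔ T)) → S ⊔ T ∈ F) ∧
  (∀ S ∈ F, ∀ x : G, S.map (MulAut.conj x).toMonoidHom ∈ F)

/-- The `F`-radical `H_F` of a subgroup `H` of `G`: the join of all subgroups of `H`
belonging to `F` that are normal in `H`. -/
def fittingRadical {G : Type*} [Group G] (F : Set (Subgroup G)) (H : Subgroup G) : Subgroup G :=
  ⨆ S ∈ {S : Subgroup G | S ∈ F ∧ S ≤ H ∧ (S.subgroupOf H).Normal}, S

/-- `M` is an `F`-maximal subgroup of `K`. -/
def IsFMaximalIn {G : Type*} [Group G] (F : Set (Subgroup G)) (M K : Subgroup G) : Prop :=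
  M ∈ F ∧ M ≤ K ∧ ∀ S ∈ F, S ≤ K → M ≤ S → S = M

/-- `V` is an `F`-injector of `G`. -/
def IsInjector {G : Type*} [Group G] (F : Set (Subgroup G)) (V : Subgroup G) : Prop :=
  ∀ K : Subgroup G, IsSubnormal' K → IsFMaximalIn F (V ⊓ K) K

/-- `V` is an `F`-injector of the subgroup `N` of `G`. -/
def IsInjectorIn {G : Type*} [Group G] (F : Set (Subgroup G)) (V N : Subgroup G) : Prop :=
  V ≤ N ∧ ∀ K : Subgroup G, K ≤ N → IsSubnormal' (K.subgroupOf N) → IsFMaximalIn F (V ⊓ K) K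

/-- `M` is an `N^π`-maximal subgroup of `X`. -/
def IsNPiMaximal (π : Set ℕ) {X : Type*} [Group X] (M : Subgroup X) : Prop :=
  IsNPiGroup π M ∧ ∀ M' : Subgroup X, IsNPiGroup π M' → M ≤ M' → M' = M

/-- `U` is an `N^π`-projector of `G`: `UK/K` is `N^π`-maximal in `G/K` for every
normal subgroup `K` of `G`. -/
def IsNPiProjector (π : Set ℕ) {G : Type*} [Group G] (U : Subgroup G) : Prop :=
  ∀ K : Subgroup G, ∀ hK : K.Normal,
    letI := hK
    IsNPiMaximal π ((U ⊔ K).map (QuotientGroup.mk' K))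

/-- An `N^π`-Fitting class of (finite) groups: a non-empty isomorphism-closed class
closed under `N^π`-Dnormal subgroups and under joins of pairs of `N^π`-Dnormal
subgroups. -/
def IsNPiFittingClass (π : Set ℕ) (F : (H : Type) → [_inst : Group H] → Prop) : Prop :=
  (∃ (H : Type) (g : Group H) (_ : Finite H), F H (_inst := g)) ∧
  (∀ (H K : Type) [Group H] [Group K] [Finite H] [Finite K],
    F H → Nonempty (H ≃* K) → F K) ∧
  (∀ (H : Type) [Group H] [Finite H] (N : Subgroup H),
    F H → IsDnormal π N → F ↥N) ∧
  (∀ (H : Type) [Group H] [Finite H] (M N : Subgroup H),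
    F ↥M → F ↥N → IsDnormal π M → IsDnormal π N → M ⊔ N = ⊤ → F H)


/-!
For `|π| ≤ 1` the class `N^π` is the class of finite nilpotent groups and `N^π`-Dnormal means
normal, so the join property is Fitting's theorem. For `|π| ≥ 2` write `M = O_π(M) × O^π(M)` and
`N = O_π(N) × O^π(N)`. The `π'`-factors `O^π(M)`, `O^π(N)` are normal in `G` and lie in
`D = O^π(G)`; as `D` normalizes `M` and `N`, it normalizes their characteristic `π`-factors, so by
coprimality each `π`-factor centralizes both `π'`-factors. What remains is that
`O_π(M) ⊔ O_π(N)` is a `π`-group: modulo `O_π(D)` it centralizes `D`, which has `π`-index, and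
the transfer into the centre shows that such a group, generated by two `π`-subgroups, is a
`π`-group.
-/

open Subgroup

def PiNat (π : Set ℕ) (n : ℕ) : Prop :=
  ∀ p : ℕ, p.Prime → p ∣ n → p ∈ π

namespace PiNat

variable {π : Set ℕ} {m n : ℕ}

theorem one : PiNat π 1 := fun _ hp h => absurd h hp.not_dvd_one

theorem of_dvd (h : m ∣ n) (hn : PiNat π n) : PiNat π m :=
  fun p hp hpm => hn p hp (hpm.trans h)

theorem mul (hm : PiNat π m) (hn : PiNat π n) : PiNat π (m * n) :=
  fun p hp hpmn => (hp.dvd_mul.mp hpmn).elim (hm p hp) (hn p hp)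

theorem eq_one_of_compl (h : PiNat π n) (h' : PiNat πᶜ n) : n = 1 :=
  (Nat.coprime_self n).mp (Nat.coprime_of_dvd fun p hp hpn hpn' => h' p hp hpn' (h p hp hpn))

end PiNat

section PiGroup

variable {π : Set ℕ} {X Y : Type*} [Group X] [Group Y]

theorem isPiGroup_iff : IsPiGroup π X ↔ PiNat π (Nat.card X) := Iff.rfl

theorem subgroupComap_subtype_injective (T H : Subgroup X) :
    Function.Injective (T.subtype.subgroupComap H) :=
  fun _ _ h => Subtype.ext (Subtype.ext (congrArg (fun y : H => (y : X)) h))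

namespace IsPiGroup

theorem of_injective (f : X →* Y) (hf : Function.Injective f) (h : IsPiGroup π Y) :
    IsPiGroup π X :=
  PiNat.of_dvd (card_dvd_of_injective f hf) h

theorem map {H : Subgroup X} (h : IsPiGroup π H) (f : X →* Y) : IsPiGroup π (H.map f) :=
  PiNat.of_dvd (card_map_dvd H f) h

theorem of_le {H K : Subgroup X} (hHK : H ≤ K) (h : IsPiGroup π K) : IsPiGroup π H :=
  PiNat.of_dvd (card_dvd_of_le hHK) h

theorem subgroupOf {H : Subgroup X} (h : IsPiGroup π H) (T : Subgroup X) :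
    IsPiGroup π (H.subgroupOf T) :=
  h.of_injective _ (subgroupComap_subtype_injective T H)

theorem piNat_orderOf {H : Subgroup X} (h : IsPiGroup π H) {x : X} (hx : x ∈ H) :
    PiNat π (orderOf x) :=
  PiNat.of_dvd (H.orderOf_dvd_natCard hx) h

theorem of_forall_piNat_orderOf [Finite X] (h : ∀ x : X, PiNat π (orderOf x)) :
    IsPiGroup π X := by
  intro p hp hpX
  have := Fact.mk hp
  obtain ⟨x, hx⟩ := exists_prime_orderOf_dvd_card' p hpX
  exact h x p hp hx.symm.dvd

theorem sup_of_normal {H N : Subgroup X} [N.Normal] (hH : IsPiGroup π H) (hN : IsPiGroup π N) :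
    IsPiGroup π ↥(H ⊔ N) := by
  have h := relIndex_mul_relIndex ⊥ N (H ⊔ N) bot_le le_sup_right
  rw [relIndex_bot_left, relIndex_bot_left, relIndex_sup_right] at h
  rw [isPiGroup_iff, ← h]
  exact PiNat.mul hN (PiNat.of_dvd (relIndex_dvd_card N H) hH)

theorem inf_eq_bot_of_compl {H K : Subgroup X} (hH : IsPiGroup π H) (hK : IsPiGroup πᶜ K) :
    H ⊓ K = ⊥ :=
  card_eq_one.mp <| PiNat.eq_one_of_compl (hH.of_le inf_le_left) (hK.of_le inf_le_right)

theorem of_map {f : X →* Y} {K : Subgroup X} (hK : IsPiGroup π (K.map f))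
    (hker : IsPiGroup π f.ker) : IsPiGroup π K := by
  rw [isPiGroup_iff, ← (f.ker.subgroupOf K).card_mul_index, ← relIndex, relIndex_ker]
  exact PiNat.mul (hker.subgroupOf K) hK

theorem le_of_piNat_compl_index {H N : Subgroup X} [N.Normal] (hH : IsPiGroup π H)
    (hN : PiNat πᶜ N.index) : H ≤ N := by
  have hcard : Nat.card (H.map (QuotientGroup.mk' N)) = 1 :=
    PiNat.eq_one_of_compl (PiNat.of_dvd (card_map_dvd H _) hH)
      (PiNat.of_dvd ((card_subgroup_dvd_card _).trans N.index_eq_card.symm.dvd) hN)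
  rwa [card_eq_one, Subgroup.map_eq_bot_iff, QuotientGroup.ker_mk'] at hcard

end IsPiGroup

theorem index_dvd_card_of_sup_eq_top {H N : Subgroup X} [N.Normal] (h : H ⊔ N = ⊤) :
    N.index ∣ Nat.card H := by
  rw [← relIndex_top_right, ← h, relIndex_sup_right]
  exact relIndex_dvd_card N H

theorem sup_eq_top_of_piNat_index {H K : Subgroup X} (hH : PiNat πᶜ H.index)
    (hK : PiNat π K.index) : H ⊔ K = ⊤ :=
  index_eq_one.mp <| PiNat.eq_one_of_compl (hK.of_dvd (index_dvd_of_le le_sup_right))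
    (hH.of_dvd (index_dvd_of_le le_sup_left))

end PiGroup

section ResidualAndCore

variable {π : Set ℕ} {G : Type*} [Group G]

theorem piResidual_mem [Finite G] :
    piResidual π G ∈ {N : Subgroup G | N.Normal ∧ PiNat π N.index} := by
  have htop : (⊤ : Subgroup G).Normal ∧ PiNat π (⊤ : Subgroup G).index :=
    ⟨inferInstance, by rw [index_top]; exact PiNat.one⟩
  refine InfClosed.biInf_mem ?_ (Set.toFinite _) htop fun _ hN => hN
  rintro N₁ ⟨_, h₁⟩ N₂ ⟨_, h₂⟩
  refine ⟨inferInstance, ?_⟩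
  rw [← relIndex_mul_index inf_le_right, inf_relIndex_right]
  exact PiNat.mul (h₁.of_dvd (relIndex_dvd_index_of_normal N₁ N₂)) h₂

instance piResidual_normal [Finite G] : (piResidual π G).Normal := piResidual_mem.1

theorem piNat_index_piResidual [Finite G] : PiNat π (piResidual π G).index := piResidual_mem.2

theorem piResidual_le {N : Subgroup G} [hN : N.Normal] (h : PiNat π N.index) :
    piResidual π G ≤ N :=
  iInf₂_le N ⟨hN, h⟩

theorem le_piResidual [Finite G] {H : Subgroup G} (hH : IsPiGroup πᶜ H) :
    H ≤ piResidual π G :=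
  hH.le_of_piNat_compl_index (by rw [compl_compl]; exact piNat_index_piResidual)

theorem piResidual_eq_of_sup_eq_top [Finite G] {H K : Subgroup G} [K.Normal]
    (hH : IsPiGroup π H) (hK : IsPiGroup πᶜ K) (h : H ⊔ K = ⊤) : piResidual π G = K :=
  le_antisymm (piResidual_le (PiNat.of_dvd (index_dvd_card_of_sup_eq_top h) hH))
    (le_piResidual hK)

theorem piCore_mem [Finite G] :
    piCore π G ∈ {N : Subgroup G | N.Normal ∧ IsPiGroup π N} := by
  have hbot : (⊥ : Subgroup G).Normal ∧ IsPiGroup π (⊥ : Subgroup G) :=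
    ⟨inferInstance, by rw [isPiGroup_iff, card_bot]; exact PiNat.one⟩
  refine SupClosed.biSup_mem ?_ (Set.toFinite _) hbot fun _ hN => hN
  rintro N₁ ⟨_, h₁⟩ N₂ ⟨_, h₂⟩
  exact ⟨inferInstance, h₁.sup_of_normal h₂⟩

instance piCore_normal [Finite G] : (piCore π G).Normal := piCore_mem.1

theorem isPiGroup_piCore [Finite G] : IsPiGroup π (piCore π G) := piCore_mem.2

theorem le_piCore {N : Subgroup G} [hN : N.Normal] (h : IsPiGroup π N) : N ≤ piCore π G :=
  le_iSup₂_of_le N ⟨hN, h⟩ le_rfl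

instance piCore_characteristic [Finite G] : (piCore π G).Characteristic :=
  characteristic_iff_map_le.mpr fun φ => by
    have := (piCore_normal (π := π)).map φ.toMonoidHom φ.surjective
    exact le_piCore (isPiGroup_piCore.map _)

end ResidualAndCore

def piCoreIn (π : Set ℕ) {G : Type*} [Group G] (H : Subgroup G) : Subgroup G :=
  (piCore π H).map H.subtype

section Normalizers

variable {π : Set ℕ} {G : Type*} [Group G]

theorem normalizer_le_normalizer_map_subtype {H : Subgroup G} {K : Subgroup H}
    [hK : K.Characteristic] : normalizer (H : Set G) ≤ normalizer (K.map H.subtype : Set G) := by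
  intro g hg x
  have hφ : ∀ h : H, normalizerMonoidHom H ⟨g, hg⟩ h ∈ K ↔ h ∈ K := fun h =>
    SetLike.ext_iff.mp (characteristic_iff_comap_eq.mp hK _) h
  constructor
  · rintro ⟨h, hh, rfl⟩
    exact ⟨_, (hφ h).mpr hh, rfl⟩
  · rintro ⟨k, hk, hkx⟩
    have hx : x ∈ H := (hg x).mpr (hkx ▸ k.2)
    have hxk : normalizerMonoidHom H ⟨g, hg⟩ ⟨x, hx⟩ = k := by
      ext
      exact hkx.symm
    exact ⟨⟨x, hx⟩, (hφ _).mp (hxk ▸ hk), rfl⟩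

instance piCoreIn_normal [Finite G] {H : Subgroup G} [H.Normal] : (piCoreIn π H).Normal :=
  ConjAct.normal_of_characteristic_of_normal

theorem isPiGroup_piCoreIn [Finite G] (H : Subgroup G) : IsPiGroup π (piCoreIn π H) :=
  isPiGroup_piCore.map _

theorem inf_le_piCoreIn [Finite G] {C D : Subgroup G} (hC : IsPiGroup π C)
    (h : D ≤ normalizer (C : Set G)) : C ⊓ D ≤ piCoreIn π D := by
  have : (C.subgroupOf D).Normal := normal_subgroupOf_iff_le_normalizer_inf.mpr
    ((le_inf h le_normalizer).trans inf_normalizer_le_normalizer_inf)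
  rw [← subgroupOf_map_subtype]
  exact map_mono (le_piCore (hC.subgroupOf D))

theorem commutator_le_inf_of_le_normalizer {C N : Subgroup G} [hN : N.Normal]
    (h : N ≤ normalizer (C : Set G)) : ⁅C, N⁆ ≤ C ⊓ N := by
  rw [commutator_le]
  intro c hc n hn
  rw [commutatorElement_def, mem_inf]
  constructor
  · have : n * c⁻¹ * n⁻¹ ∈ C := (mem_normalizer_iff.mp (h hn) c⁻¹).mp (inv_mem hc)
    simpa only [mul_assoc] using mul_mem hc this
  · exact mul_mem (hN.conj_mem n hn c) (inv_mem hn)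

theorem le_centralizer_of_le_normalizer {C N : Subgroup G} [N.Normal]
    (hC : IsPiGroup π C) (hN : IsPiGroup πᶜ N) (h : N ≤ normalizer (C : Set G)) :
    C ≤ centralizer (N : Set G) :=
  commutator_eq_bot_iff_le_centralizer.mp <|
    le_bot_iff.mp ((commutator_le_inf_of_le_normalizer h).trans (hC.inf_eq_bot_of_compl hN).le)

end Normalizers

section Transfer

variable {π : Set ℕ} {X : Type*} [Group X] [Finite X]

/-- The transfer `x ↦ x ^ [X : Z(X)]` into the abelian group `Z(X)` has a `π`-group as image,
generated by the images of `A` and `B`; so `x ^ [X : Z(X)]`, and with it `x`, has `π`-order. -/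
theorem isPiGroup_of_sup_eq_top_of_piNat_index_center {A B : Subgroup X} (hA : IsPiGroup π A)
    (hB : IsPiGroup π B) (hAB : A ⊔ B = ⊤) (hZ : PiNat π (center X).index) :
    IsPiGroup π X := by
  set φ := MonoidHom.transferCenterPow X
  have hφ : IsPiGroup π φ.range := by
    rw [MonoidHom.range_eq_map, ← hAB, Subgroup.map_sup]
    have := normal_of_isMulCommutative (B.map φ)
    exact (hA.map φ).sup_of_normal (hB.map φ)
  refine IsPiGroup.of_forall_piNat_orderOf fun x => ?_
  have hx : orderOf x ∣ orderOf (x ^ (center X).index) * (center X).index :=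
    orderOf_dvd_of_pow_eq_one (by rw [mul_comm, pow_mul, pow_orderOf_eq_one])
  refine PiNat.of_dvd hx (PiNat.mul ?_ hZ)
  rw [← MonoidHom.transferCenterPow_apply, Subgroup.orderOf_coe]
  exact hφ.piNat_orderOf (MonoidHom.mem_range.mpr ⟨x, rfl⟩)

theorem IsPiGroup.sup_of_le_centralizer {A B E : Subgroup X} [E.Normal] (hA : IsPiGroup π A)
    (hB : IsPiGroup π B) (hE : PiNat π E.index) (h : A ⊔ B ≤ centralizer (E : Set X)) :
    IsPiGroup π ↥(A ⊔ B) := by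
  refine isPiGroup_of_sup_eq_top_of_piNat_index_center (hA.subgroupOf _) (hB.subgroupOf _) ?_ ?_
  · rw [← subgroupOf_sup le_sup_left le_sup_right, subgroupOf_self]
  · have hEZ : E.subgroupOf (A ⊔ B) ≤ center ↥(A ⊔ B) := fun e he =>
      mem_center_iff.mpr fun k => Subtype.ext (h k.2 e he).symm
    exact PiNat.of_dvd ((index_dvd_of_le hEZ).trans (relIndex_dvd_index_of_normal E _)) hE

theorem IsPiGroup.sup_of_piResidual_le_normalizer {A B : Subgroup X} (hA : IsPiGroup π A)
    (hB : IsPiGroup π B) (hnA : piResidual π X ≤ normalizer (A : Set X))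
    (hnB : piResidual π X ≤ normalizer (B : Set X)) : IsPiGroup π ↥(A ⊔ B) := by
  set D := piResidual π X
  set f := QuotientGroup.mk' (piCoreIn π D)
  have hf : Function.Surjective f := QuotientGroup.mk'_surjective _
  have hcent : ∀ C : Subgroup X, IsPiGroup π C → D ≤ normalizer (C : Set X) →
      C.map f ≤ centralizer (D.map f : Set _) := by
    intro C hC hn
    rw [← commutator_eq_bot_iff_le_centralizer, ← map_commutator, Subgroup.map_eq_bot_iff,
      QuotientGroup.ker_mk']
    exact (commutator_le_inf_of_le_normalizer hn).trans (inf_le_piCoreIn hC hn)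
  have : (D.map f).Normal := piResidual_normal.map f hf
  refine of_map (f := f) ?_ (by rw [QuotientGroup.ker_mk']; exact isPiGroup_piCoreIn D)
  rw [Subgroup.map_sup]
  exact (hA.map f).sup_of_le_centralizer (hB.map f)
    (PiNat.of_dvd (index_map_dvd D hf) piNat_index_piResidual)
    (sup_le (hcent A hA hnA) (hcent B hB hnB))

end Transfer

section Nilpotent

variable {π : Set ℕ} {G : Type*} [Group G] [Finite G]

theorem IsPiGroup.isPGroup {p : ℕ} (h : IsPiGroup π G) (hπ : ∀ q ∈ π, q.Prime → q = p) :
    IsPGroup p G :=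
  IsPGroup.of_card (Nat.eq_prime_pow_of_unique_prime_dvd Nat.card_pos.ne'
    fun hq hqG => hπ _ (h _ hq hqG) hq)

theorem IsPiGroup.isNilpotent_of_subsingleton (hπ : π.Subsingleton) (h : IsPiGroup π G) :
    Group.IsNilpotent G := by
  by_cases hG : Nat.card G = 1
  · have := (Nat.card_eq_one_iff_unique.mp hG).1
    infer_instance
  obtain ⟨p, hp, hpG⟩ := Nat.exists_prime_and_dvd hG
  have := Fact.mk hp
  exact (h.isPGroup fun q hq _ => hπ hq (h p hp hpG)).isNilpotent

theorem IsPGroup.isPiGroup {p : ℕ} [Fact p.Prime] (h : IsPGroup p G) (hp : p ∈ π) :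
    IsPiGroup π G := fun q hq hqG => by
  obtain ⟨n, hn⟩ := IsPGroup.iff_card.mp h
  rw [hn] at hqG
  rwa [(Nat.prime_dvd_prime_iff_eq hq Fact.out).mp (hq.dvd_of_dvd_pow hqG)]

theorem eq_top_of_forall_exists_sylow_le {H : Subgroup G}
    (h : ∀ p : ℕ, p.Prime → ∃ P : Sylow p G, ↑P ≤ H) : H = ⊤ := by
  rw [← index_eq_one]
  by_contra hH
  obtain ⟨p, hp, hpH⟩ := Nat.exists_prime_and_dvd hH
  have := Fact.mk hp
  obtain ⟨P, hPH⟩ := h p hp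
  exact P.not_dvd_index (hpH.trans (index_dvd_of_le hPH))

theorem piCore_sup_piCore_compl_of_isNilpotent (hG : Group.IsNilpotent G) :
    piCore π G ⊔ piCore πᶜ G = ⊤ := by
  refine eq_top_of_forall_exists_sylow_le fun p hp => ?_
  have := Fact.mk hp
  obtain ⟨P⟩ : Nonempty (Sylow p G) := inferInstance
  have hSylow := (Group.isNilpotent_of_finite_tfae (G := G)).out 0 3
  have : (P : Subgroup G).Normal := hSylow.mp hG p ‹_› P
  refine ⟨P, ?_⟩
  by_cases hpπ : p ∈ π
  · exact (le_piCore (P.isPGroup'.isPiGroup hpπ)).trans le_sup_left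
  · exact (le_piCore (P.isPGroup'.isPiGroup (π := πᶜ) hpπ)).trans le_sup_right

theorem piCoreIn_sup_piCoreIn_compl {U : Subgroup G} (hU : Group.IsNilpotent U) :
    piCoreIn π U ⊔ piCoreIn πᶜ U = U := by
  rw [piCoreIn, piCoreIn, ← Subgroup.map_sup, piCore_sup_piCore_compl_of_isNilpotent hU,
    ← MonoidHom.range_eq_map, range_subtype]

/-- Fitting's theorem: the Sylow `p`-subgroups of `U` and `V` generate a normal `p`-subgroup whose
index divides the order of the `p'`-part of `U ⊔ V`. -/
theorem isNilpotent_of_sup_eq_top {U V : Subgroup G} [U.Normal] [V.Normal]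
    (hU : Group.IsNilpotent U) (hV : Group.IsNilpotent V) (h : U ⊔ V = ⊤) :
    Group.IsNilpotent G := by
  refine ((Group.isNilpotent_of_finite_tfae (G := G)).out 3 0).mp ?_
  intro p _ P
  set N := piCoreIn {p} U ⊔ piCoreIn {p} V
  have hNp : IsPGroup p N :=
    ((isPiGroup_piCoreIn U).sup_of_normal (isPiGroup_piCoreIn V)).isPGroup fun _ hq _ => hq
  have hsup : (piCoreIn {p}ᶜ U ⊔ piCoreIn {p}ᶜ V) ⊔ N = ⊤ := by
    rw [sup_comm, sup_sup_sup_comm, piCoreIn_sup_piCoreIn_compl hU,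
      piCoreIn_sup_piCoreIn_compl hV, h]
  have hindex : ¬ p ∣ N.index := fun hpN =>
    PiNat.of_dvd (index_dvd_card_of_sup_eq_top hsup)
      ((isPiGroup_piCoreIn U).sup_of_normal (isPiGroup_piCoreIn V)) p Fact.out hpN rfl
  have := Sylow.unique_of_normal (hNp.toSylow hindex)
    (by rw [IsPGroup.toSylow_coe]; infer_instance)
  rw [Subsingleton.elim P (hNp.toSylow hindex), IsPGroup.toSylow_coe]
  infer_instance

theorem isNilpotent_sup {U V : Subgroup G} [U.Normal] [V.Normal] (hU : Group.IsNilpotent U)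
    (hV : Group.IsNilpotent V) : Group.IsNilpotent ↥(U ⊔ V) := by
  refine isNilpotent_of_sup_eq_top (U := U.subgroupOf (U ⊔ V)) (V := V.subgroupOf (U ⊔ V))
    (Group.nilpotent_of_mulEquiv (subgroupOfEquivOfLe le_sup_left).symm)
    (Group.nilpotent_of_mulEquiv (subgroupOfEquivOfLe le_sup_right).symm) ?_
  rw [← subgroupOf_sup le_sup_left le_sup_right, subgroupOf_self]

end Nilpotent

namespace IsNPiGroup

variable {π : Set ℕ} {G : Type*} [Group G]

theorem of_sup_eq_top {H L : Subgroup G} [L.Normal] (hH : IsPiGroup π H)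
    (hL : IsPiGroup πᶜ L) (hLnil : Group.IsNilpotent L) (hHL : H ≤ centralizer (L : Set G))
    (h : H ⊔ L = ⊤) : IsNPiGroup π G := by
  have hLH : L ≤ normalizer (H : Set G) :=
    (le_centralizer_iff.mp hHL).trans (centralizer_le_normalizer _)
  have : H.Normal := normalizer_eq_top_iff.mp (top_le_iff.mp (h ▸ sup_le le_normalizer hLH))
  exact ⟨H, L, this, inferInstance, hH.inf_eq_bot_of_compl hL, h, hH, hL, hLnil⟩

theorem to_subgroup (h : IsNPiGroup π G) (T : Subgroup G) : IsNPiGroup π T := by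
  obtain ⟨H, K, _, _, -, hHK, hH, hK, hKnil⟩ := h
  have hTK : Group.IsNilpotent (K.subgroupOf T) := Subgroup.isNilpotent_of_ker_le_center _
    (((MonoidHom.ker_eq_bot_iff _).mpr (subgroupComap_subtype_injective T K)).le.trans bot_le)
  have hHT : PiNat πᶜ (H.subgroupOf T).index :=
    PiNat.of_dvd ((relIndex_dvd_index_of_normal H T).trans
      (index_dvd_card_of_sup_eq_top ((sup_comm K H).trans hHK))) hK
  have hKT : PiNat π (K.subgroupOf T).index :=
    PiNat.of_dvd ((relIndex_dvd_index_of_normal K T).trans (index_dvd_card_of_sup_eq_top hHK)) hH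
  exact ⟨H.subgroupOf T, K.subgroupOf T, inferInstance, inferInstance,
    (hH.subgroupOf T).inf_eq_bot_of_compl (hK.subgroupOf T), sup_eq_top_of_piNat_index hHT hKT,
    hH.subgroupOf T, hK.subgroupOf T, hTK⟩

variable [Finite G]

theorem piCore_sup_piResidual (h : IsNPiGroup π G) : piCore π G ⊔ piResidual π G = ⊤ := by
  obtain ⟨H, K, _, _, -, hHK, hH, hK, -⟩ := h
  rw [piResidual_eq_of_sup_eq_top hH hK hHK, eq_top_iff, ← hHK]
  exact sup_le_sup_right (le_piCore hH) K

theorem isPiGroup_piResidual (h : IsNPiGroup π G) : IsPiGroup πᶜ (piResidual π G) := by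
  obtain ⟨H, K, -, _, -, hHK, hH, hK, -⟩ := h
  rwa [piResidual_eq_of_sup_eq_top hH hK hHK]

theorem isNilpotent_piResidual (h : IsNPiGroup π G) : Group.IsNilpotent (piResidual π G) := by
  obtain ⟨H, K, -, _, -, hHK, hH, hK, hKnil⟩ := h
  rwa [piResidual_eq_of_sup_eq_top hH hK hHK]

theorem isNilpotent_piResidualIn {M : Subgroup G} (h : IsNPiGroup π M) :
    Group.IsNilpotent (piResidualIn π M) := by
  have := h.isNilpotent_piResidual
  exact Group.nilpotent_of_mulEquiv (equivMapOfInjective _ _ M.subtype_injective)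

theorem piCoreIn_sup_piResidualIn {M : Subgroup G} (h : IsNPiGroup π M) :
    piCoreIn π M ⊔ piResidualIn π M = M := by
  rw [piCoreIn, piResidualIn, ← Subgroup.map_sup, h.piCore_sup_piResidual,
    ← MonoidHom.range_eq_map, range_subtype]

theorem piCoreIn_le_centralizer {M : Subgroup G} (h : IsNPiGroup π M) :
    piCoreIn π M ≤ centralizer (piResidualIn π M : Set G) := by
  rw [← commutator_eq_bot_iff_le_centralizer, piCoreIn, piResidualIn, ← map_commutator,
    le_bot_iff.mp ((commutator_le_inf _ _).trans
      (isPiGroup_piCore.inf_eq_bot_of_compl h.isPiGroup_piResidual).le), Subgroup.map_bot]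

theorem of_isNilpotent (hG : Group.IsNilpotent G) : IsNPiGroup π G :=
  ⟨piCore π G, piCore πᶜ G, inferInstance, inferInstance,
    isPiGroup_piCore.inf_eq_bot_of_compl isPiGroup_piCore,
    piCore_sup_piCore_compl_of_isNilpotent hG, isPiGroup_piCore, isPiGroup_piCore,
    Subgroup.isNilpotent _⟩

theorem isNilpotent_of_subsingleton (h : IsNPiGroup π G) (hπ : π.Subsingleton) :
    Group.IsNilpotent G := by
  obtain ⟨H, K, _, _, -, hHK, hH, -, hKnil⟩ := h
  exact isNilpotent_of_sup_eq_top (hH.isNilpotent_of_subsingleton hπ) hKnil hHK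

end IsNPiGroup

theorem IsNPiGroup.of_sup_eq_top_of_piResidual_le_normalizer {π : Set ℕ} {G : Type*} [Group G]
    [Finite G] {M N : Subgroup G} [(piResidualIn π M).Normal] [(piResidualIn π N).Normal]
    (hM : IsNPiGroup π M) (hN : IsNPiGroup π N) (hDM : piResidual π G ≤ normalizer (M : Set G))
    (hDN : piResidual π G ≤ normalizer (N : Set G)) (h : M ⊔ N = ⊤) : IsNPiGroup π G := by
  have hU : IsPiGroup πᶜ (piResidualIn π M) := hM.isPiGroup_piResidual.map _
  have hV : IsPiGroup πᶜ (piResidualIn π N) := hN.isPiGroup_piResidual.map _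
  have hA : piResidual π G ≤ normalizer (piCoreIn π M : Set G) :=
    hDM.trans normalizer_le_normalizer_map_subtype
  have hB : piResidual π G ≤ normalizer (piCoreIn π N : Set G) :=
    hDN.trans normalizer_le_normalizer_map_subtype
  have hAV : piCoreIn π M ≤ centralizer (piResidualIn π N : Set G) :=
    le_centralizer_of_le_normalizer (isPiGroup_piCoreIn M) hV ((le_piResidual hV).trans hA)
  have hBU : piCoreIn π N ≤ centralizer (piResidualIn π M : Set G) :=
    le_centralizer_of_le_normalizer (isPiGroup_piCoreIn N) hU ((le_piResidual hU).trans hB)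
  refine of_sup_eq_top ((isPiGroup_piCoreIn M).sup_of_piResidual_le_normalizer
    (isPiGroup_piCoreIn N) hA hB) (hU.sup_of_normal hV)
    (isNilpotent_sup hM.isNilpotent_piResidualIn hN.isNilpotent_piResidualIn) ?_ ?_
  · have hcent : ∀ {C : Subgroup G}, C ≤ centralizer (piResidualIn π M : Set G) →
        C ≤ centralizer (piResidualIn π N : Set G) →
        C ≤ centralizer ((piResidualIn π M ⊔ piResidualIn π N : Subgroup G) : Set G) :=
      fun hCU hCV =>
        le_centralizer_iff.mpr (sup_le (le_centralizer_iff.mp hCU) (le_centralizer_iff.mp hCV))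
    exact sup_le (hcent hM.piCoreIn_le_centralizer hAV) (hcent hBU hN.piCoreIn_le_centralizer)
  · rw [sup_sup_sup_comm, hM.piCoreIn_sup_piResidualIn, hN.piCoreIn_sup_piResidualIn, h]

theorem nPi_is_nPi_fitting_class_general (π : Set ℕ) :
    (∀ (G : Type) [Group G] [Finite G] (N : Subgroup G),
      IsNPiGroup π G → IsDnormal π N → IsNPiGroup π ↥N) ∧
    (∀ (G : Type) [Group G] [Finite G] (M N : Subgroup G),
      IsDnormal π M → IsDnormal π N → M ⊔ N = ⊤ →
      IsNPiGroup π ↥M → IsNPiGroup π ↥N → IsNPiGroup π G) := by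
  refine ⟨fun G _ _ N hG _ => hG.to_subgroup N, fun G _ _ M N hdM hdN h hM hN => ?_⟩
  rcases hdM with ⟨hπ, _⟩ | ⟨hπ, _, hDM⟩
  · have : N.Normal := hdN.elim And.right fun hdN => absurd hπ hdN.1
    exact .of_isNilpotent <| isNilpotent_of_sup_eq_top (hM.isNilpotent_of_subsingleton hπ)
      (hN.isNilpotent_of_subsingleton hπ) h
  · obtain ⟨-, _, hDN⟩ := hdN.resolve_left fun hdN => hπ hdN.1
    exact hM.of_sup_eq_top_of_piResidual_le_normalizer hN hDM hDN h

/-- Remark 2.13(3): the class `N^π` is an `N^π`-Fitting class. -/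
theorem nPi_is_nPi_fitting_class (π : Set ℕ) (hπ : ∀ p ∈ π, p.Prime) :
    (∀ (G : Type) [Group G] [Finite G] (N : Subgroup G),
      IsNPiGroup π G → IsDnormal π N → IsNPiGroup π ↥N) ∧
    (∀ (G : Type) [Group G] [Finite G] (M N : Subgroup G),
      IsDnormal π M → IsDnormal π N → M ⊔ N = ⊤ →
      IsNPiGroup π ↥M → IsNPiGroup π ↥N → IsNPiGroup π G) :=
  nPi_is_nPi_fitting_class_general π
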